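/- Fix an integer n ≥ 0 and real parameters p, q with 0 ≤ q < p. Then, as L → ∞, the restricted partition function satisfies R(L, n; p, q) ~ (1 + n·p)^{L−1} / (n!·(p−q)^{n}); precisely, the function L ↦ R(L, n; p, q) · n! · (p−q)^{n} / (1 + n·p)^{L−1} tends to 1 as L → ∞ (Filter.Tendsto along atTop to the neighborhood of 1). -/

import Mathlib

open Finset

/-- The stationary weight of a word `a` with entries in `{0,1}` (encoded as `Fin 2`):
the product over positions `i` with `a i = 0` of `1 + p·m_i(a) + q·n_i(a)`,
where `m_i(a)` (resp. `n_i(a)`) is the number of `1`'s strictly before (resp. after) `i`. -/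
noncomputable def wt (p q : ℝ) {m : ℕ} (a : Fin m → Fin 2) : ℝ :=
  ∏ i ∈ univ.filter (fun i => a i = 0),
    (1 + p * ((univ.filter (fun j => j < i ∧ a j = 1)).card : ℝ)
       + q * ((univ.filter (fun j => i < j ∧ a j = 1)).card : ℝ))

/-- The number of `1`'s in the word `a`. -/
def ones {m : ℕ} (a : Fin m → Fin 2) : ℕ := (univ.filter (fun i => a i = 1)).card

/-- The restricted partition function `R(L, n; p, q)`: the sum of the weights `wt p q a`
over all words `a` of length `L - 1` with entries in `{0,1}` having exactly `n` ones. -/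
noncomputable def R (L n : ℕ) (p q : ℝ) : ℝ :=
  ∑ a ∈ univ.filter (fun a : Fin (L - 1) → Fin 2 => ones a = n), wt p q a

/-!
Group the zeros of a word with `n` ones by the number `k` of ones to their right: such a zero
has weight `d k = 1 + p (n - k) + q k`, and a word is determined by how many zeros lie in each of
the `n + 1` gaps. Hence `R (L, n) = h_N (d 0, …, d n)` with `N = L - 1 - n`, a complete homogeneous
symmetric polynomial. Its largest variable is `d 0 = 1 + n p`, and `d 0 - d k = (p - q) k`.
After dividing by `(d 0) ^ N`, `h_N (1, r 1, …, r n)` with `r k = d k / d 0 ∈ [0, 1)` is the `N`-th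
partial sum of the generating series `∑ j, h_j (r) = ∏ k, (1 - r k)⁻¹`, whence
`h_N (d) ~ (d 0) ^ (N + n) / ∏ k, (d 0 - d k) = (d 0) ^ (L - 1) / (n! (p - q) ^ n)`.
-/

open Filter Topology

noncomputable def completeHomogeneous {k : ℕ} (d : Fin k → ℝ) (N : ℕ) : ℝ :=
  ∑ g ∈ Nat.antidiagonalTuple k N, ∏ i, d i ^ g i

theorem completeHomogeneous_zero {k : ℕ} (d : Fin k → ℝ) : completeHomogeneous d 0 = 1 := by
  simp [completeHomogeneous, Nat.antidiagonalTuple_zero_right]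

theorem completeHomogeneous_fin_zero (d : Fin 0 → ℝ) (N : ℕ) :
    completeHomogeneous d N = if N = 0 then 1 else 0 := by
  cases N <;> simp [completeHomogeneous]

theorem completeHomogeneous_eq_sum_antidiagonal {k : ℕ} (d : Fin (k + 1) → ℝ) (N : ℕ) :
    completeHomogeneous d N
      = ∑ ab ∈ antidiagonal N, d 0 ^ ab.1 * completeHomogeneous (Fin.tail d) ab.2 := by
  simp only [completeHomogeneous, mul_sum]
  rw [sum_sigma']
  refine sum_bij' (fun g _ => ⟨(g 0, N - g 0), Fin.tail g⟩) (fun x _ => Fin.cons x.1.1 x.2)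
    ?_ ?_ ?_ ?_ ?_
  · intro g hg
    simp only [Nat.mem_antidiagonalTuple, Fin.sum_univ_succ] at hg
    simp [Nat.mem_antidiagonalTuple, Fin.tail, ← hg]
  · rintro ⟨⟨a, b⟩, t⟩ h
    simp only [mem_sigma, HasAntidiagonal.mem_antidiagonal, Nat.mem_antidiagonalTuple] at h
    simp [Nat.mem_antidiagonalTuple, Fin.sum_univ_succ, h.2, h.1]
  · intro g _
    simp
  · rintro ⟨⟨a, b⟩, t⟩ h
    simp only [mem_sigma, HasAntidiagonal.mem_antidiagonal] at h
    simp [← h.1]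
  · intro g _
    simp [Fin.prod_univ_succ, Fin.tail]

theorem completeHomogeneous_succ {k : ℕ} (d : Fin (k + 1) → ℝ) (N : ℕ) :
    completeHomogeneous d (N + 1)
      = d 0 * completeHomogeneous d N + completeHomogeneous (Fin.tail d) (N + 1) := by
  rw [completeHomogeneous_eq_sum_antidiagonal, Nat.sum_antidiagonal_succ,
    completeHomogeneous_eq_sum_antidiagonal, mul_sum]
  simp only [pow_zero, one_mul, pow_succ', mul_assoc]
  ring

theorem completeHomogeneous_const_mul {k : ℕ} (c : ℝ) (d : Fin k → ℝ) (N : ℕ) :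
    completeHomogeneous (fun i => c * d i) N = c ^ N * completeHomogeneous d N := by
  rw [completeHomogeneous, completeHomogeneous, mul_sum]
  refine sum_congr rfl fun g hg => ?_
  rw [← Nat.mem_antidiagonalTuple.1 hg, ← prod_pow_eq_pow_sum, ← prod_mul_distrib]
  simp only [mul_pow]

theorem HasSum.mul_antidiagonal {f g : ℕ → ℝ} {a b : ℝ} (hf : HasSum f a) (hg : HasSum g b) :
    HasSum (fun n => ∑ kl ∈ antidiagonal n, f kl.1 * g kl.2) (a * b) := by
  have hf' : Summable fun n => ‖f n‖ := hf.summable.abs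
  have hg' : Summable fun n => ‖g n‖ := hg.summable.abs
  rw [← hf.tsum_eq, ← hg.tsum_eq, tsum_mul_tsum_eq_tsum_sum_antidiagonal_of_summable_norm hf' hg']
  exact (summable_sum_mul_antidiagonal_of_summable_norm' hf' hf.summable hg' hg.summable).hasSum

theorem hasSum_completeHomogeneous {k : ℕ} (r : Fin k → ℝ) (hr : ∀ i, |r i| < 1) :
    HasSum (completeHomogeneous r) (∏ i, (1 - r i)⁻¹) := by
  induction k with
  | zero =>
    simp only [funext (completeHomogeneous_fin_zero r), univ_eq_empty, prod_empty]
    exact hasSum_ite_eq 0 1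
  | succ k ih =>
    rw [funext (completeHomogeneous_eq_sum_antidiagonal r), Fin.prod_univ_succ]
    exact (hasSum_geometric_of_abs_lt_one (hr 0)).mul_antidiagonal (ih _ fun i => hr i.succ)

theorem tendsto_completeHomogeneous_cons_one {k : ℕ} (r : Fin k → ℝ) (hr : ∀ i, |r i| < 1) :
    Tendsto (completeHomogeneous (Fin.cons 1 r : Fin (k + 1) → ℝ)) atTop
      (𝓝 (∏ i, (1 - r i)⁻¹)) := by
  have hpartial : ∀ N, completeHomogeneous (Fin.cons 1 r : Fin (k + 1) → ℝ) N
      = ∑ j ∈ range (N + 1), completeHomogeneous r j := by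
    intro N
    rw [completeHomogeneous_eq_sum_antidiagonal, ← Nat.sum_antidiagonal_swap]
    simp [Nat.sum_antidiagonal_eq_sum_range_succ (fun a _ => completeHomogeneous r a)]
  rw [funext hpartial]
  exact (hasSum_completeHomogeneous r hr).tendsto_sum_nat.comp (tendsto_add_atTop_nat 1)

theorem tendsto_completeHomogeneous_mul_prod_div_pow {k : ℕ} (d : Fin (k + 1) → ℝ)
    (h0 : d 0 ≠ 0) (hd : ∀ i : Fin k, |d i.succ| < |d 0|) :
    Tendsto (fun N => completeHomogeneous d N * (∏ i : Fin k, (d 0 - d i.succ)) / d 0 ^ (N + k))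
      atTop (𝓝 1) := by
  set r : Fin k → ℝ := fun i => d i.succ / d 0
  have hr : ∀ i, |r i| < 1 := fun i => by
    rw [abs_div, div_lt_one (abs_pos.2 h0)]
    exact hd i
  have hd_eq : d = fun i => d 0 * (Fin.cons 1 r : Fin (k + 1) → ℝ) i := by
    ext i
    cases i using Fin.cases <;> simp [r, mul_div_cancel₀ _ h0]
  have hscale : ∀ N, completeHomogeneous d N
      = d 0 ^ N * completeHomogeneous (Fin.cons 1 r : Fin (k + 1) → ℝ) N := fun N => by
    conv_lhs => rw [hd_eq]
    exact completeHomogeneous_const_mul _ _ N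
  have hprod : ∏ i : Fin k, (d 0 - d i.succ) = d 0 ^ k * ∏ i, (1 - r i) := by
    rw [← Fin.prod_const k (d 0), ← prod_mul_distrib]
    refine prod_congr rfl fun i _ => ?_
    rw [mul_sub, mul_one, mul_div_cancel₀ _ h0]
  have hone : (∏ i, (1 - r i)⁻¹) * ∏ i, (1 - r i) = 1 := by
    rw [← prod_mul_distrib]
    refine prod_eq_one fun i _ => inv_mul_cancel₀ (sub_ne_zero.2 fun h => ?_)
    simpa [← h] using hr i
  have hlim := (tendsto_completeHomogeneous_cons_one r hr).mul_const (∏ i, (1 - r i))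
  rw [hone] at hlim
  refine hlim.congr fun N => ?_
  rw [hscale, hprod, pow_add]
  field_simp

/-- Deleting a trailing `1` from a word raises `n_i` by one at every remaining zero, which turns
the constant `c` into `c + q`; this is why the constant `1` of `wt` is made a parameter. -/
noncomputable def wtc (p q c : ℝ) {m : ℕ} (a : Fin m → Fin 2) : ℝ :=
  ∏ i ∈ univ.filter (fun i => a i = 0),
    (c + p * ((univ.filter (fun j => j < i ∧ a j = 1)).card : ℝ)
       + q * ((univ.filter (fun j => i < j ∧ a j = 1)).card : ℝ))

noncomputable def Rc (p q c : ℝ) (m n : ℕ) : ℝ :=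
  ∑ a ∈ univ.filter (fun a : Fin m → Fin 2 => ones a = n), wtc p q c a

theorem R_eq_Rc (L n : ℕ) (p q : ℝ) : R L n p q = Rc p q 1 (L - 1) n := rfl

theorem ones_le {m : ℕ} (a : Fin m → Fin 2) : ones a ≤ m :=
  (card_filter_le _ _).trans_eq (card_fin m)

section snoc

variable (p q c : ℝ) {m : ℕ} (b : Fin m → Fin 2) (x : Fin 2)

theorem ones_snoc :
    ones (Fin.snoc b x : Fin (m + 1) → Fin 2) = ones b + if x = 1 then 1 else 0 := by
  rw [ones, ones, card_filter, card_filter, Fin.sum_univ_castSucc]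
  simp

theorem card_lt_castSucc_snoc (i : Fin m) :
    #{j | j < i.castSucc ∧ (Fin.snoc b x : Fin (m + 1) → Fin 2) j = 1}
      = #{j | j < i ∧ b j = 1} := by
  rw [card_filter, card_filter, Fin.sum_univ_castSucc]
  simp [(Fin.castSucc_lt_last i).not_gt]

theorem card_castSucc_lt_snoc (i : Fin m) :
    #{j | i.castSucc < j ∧ (Fin.snoc b x : Fin (m + 1) → Fin 2) j = 1}
      = #{j | i < j ∧ b j = 1} + if x = 1 then 1 else 0 := by
  rw [card_filter, card_filter, Fin.sum_univ_castSucc]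
  simp [Fin.castSucc_lt_last]

theorem card_lt_last_snoc :
    #{j | j < Fin.last m ∧ (Fin.snoc b x : Fin (m + 1) → Fin 2) j = 1} = ones b := by
  rw [ones, card_filter, card_filter, Fin.sum_univ_castSucc]
  simp [Fin.castSucc_lt_last]

theorem card_last_lt_snoc :
    #{j | Fin.last m < j ∧ (Fin.snoc b x : Fin (m + 1) → Fin 2) j = 1} = 0 := by
  rw [card_filter, Fin.sum_univ_castSucc]
  simp [(Fin.castSucc_lt_last _).not_gt]

theorem wtc_snoc_zero :
    wtc p q c (Fin.snoc b 0 : Fin (m + 1) → Fin 2) = wtc p q c b * (c + p * ones b) := by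
  rw [wtc, wtc, prod_filter, prod_filter, Fin.prod_univ_castSucc]
  simp [card_lt_castSucc_snoc, card_castSucc_lt_snoc, card_lt_last_snoc, card_last_lt_snoc]

theorem wtc_snoc_one : wtc p q c (Fin.snoc b 1 : Fin (m + 1) → Fin 2) = wtc p q (c + q) b := by
  rw [wtc, wtc, prod_filter, prod_filter, Fin.prod_univ_castSucc]
  simp only [Fin.snoc_castSucc, Fin.snoc_last, card_lt_castSucc_snoc, card_castSucc_lt_snoc,
    if_true, Fin.isValue, one_ne_zero, if_false, mul_one, Nat.cast_add, Nat.cast_one]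
  refine prod_congr rfl fun i _ => ?_
  split_ifs <;> ring

theorem sum_pi_fin_two_succ {M : Type*} [AddCommMonoid M] (f : (Fin (m + 1) → Fin 2) → M) :
    ∑ a, f a = ∑ b : Fin m → Fin 2, f (Fin.snoc b 0) + ∑ b : Fin m → Fin 2, f (Fin.snoc b 1) := by
  rw [← (Fin.snocEquiv fun _ => Fin 2).sum_comp, Fintype.sum_prod_type, Fin.sum_univ_two]
  rfl

end snoc

/-- The weight of a zero followed by exactly `k` of the `n` ones of a word. -/
noncomputable def gapWeight (p q c : ℝ) (n : ℕ) (k : Fin (n + 1)) : ℝ := c + p * (n - k) + q * k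

section gapWeight

variable (p q c : ℝ) (n : ℕ)

theorem gapWeight_zero : gapWeight p q c n 0 = c + n * p := by
  simp [gapWeight, mul_comm]

theorem tail_gapWeight : Fin.tail (gapWeight p q c (n + 1)) = gapWeight p q (c + q) n := by
  ext k
  simp only [Fin.tail, gapWeight, Fin.val_succ, Nat.cast_add, Nat.cast_one]
  ring

theorem gapWeight_zero_sub_succ (i : Fin n) :
    gapWeight p q c n 0 - gapWeight p q c n i.succ = (p - q) * ((i : ℕ) + 1) := by
  simp only [gapWeight, Fin.val_zero, Fin.val_succ, Nat.cast_zero, Nat.cast_add, Nat.cast_one]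
  ring

theorem prod_gapWeight_zero_sub_succ :
    ∏ i : Fin n, (gapWeight p q c n 0 - gapWeight p q c n i.succ) = n.factorial * (p - q) ^ n := by
  simp_rw [gapWeight_zero_sub_succ, prod_mul_distrib, Fin.prod_const,
    Fin.prod_univ_eq_prod_range (fun i => (i : ℝ) + 1), mul_comm]
  congr 1
  exact_mod_cast prod_range_add_one_eq_factorial n

variable {p q c}

theorem abs_gapWeight_succ_lt (hc : 0 ≤ c) (hq : 0 ≤ q) (hpq : q < p) (i : Fin n) :
    |gapWeight p q c n i.succ| < |gapWeight p q c n 0| := by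
  have hpos : 0 ≤ gapWeight p q c n i.succ := by
    have : (i : ℝ) + 1 ≤ n := by exact_mod_cast i.isLt
    simp only [gapWeight, Fin.val_succ, Nat.cast_add, Nat.cast_one]
    nlinarith
  have hgap := gapWeight_zero_sub_succ p q c n i
  have : 0 < (p - q) * ((i : ℕ) + 1) := by
    have := sub_pos.2 hpq
    positivity
  rw [abs_of_nonneg hpos, abs_of_nonneg (by linarith)]
  linarith

end gapWeight

theorem Rc_succ_zero (p q c : ℝ) (m : ℕ) : Rc p q c (m + 1) 0 = c * Rc p q c m 0 := by
  rw [Rc, Rc, sum_filter, sum_filter, sum_pi_fin_two_succ, mul_sum]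
  simp only [ones_snoc, wtc_snoc_zero, Fin.isValue, zero_ne_one, one_ne_zero, ↓reduceIte,
    add_zero, Nat.add_eq_zero_iff, and_false, sum_const_zero, mul_ite, mul_zero]
  refine sum_congr rfl fun b _ => ?_
  split_ifs with h <;> simp [h, mul_comm]

theorem Rc_succ_succ (p q c : ℝ) (m n : ℕ) :
    Rc p q c (m + 1) (n + 1) = (c + p * (n + 1)) * Rc p q c m (n + 1) + Rc p q (c + q) m n := by
  rw [Rc, Rc, Rc, sum_filter, sum_filter, sum_filter, sum_pi_fin_two_succ, mul_sum]
  simp only [ones_snoc, wtc_snoc_zero, wtc_snoc_one, Fin.isValue, zero_ne_one, ↓reduceIte,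
    add_zero, mul_ite, mul_zero, add_left_inj]
  refine sum_congr rfl fun b _ => ?_
  split_ifs with h <;> simp [h, mul_comm]

theorem Rc_of_lt (p q c : ℝ) {m n : ℕ} (h : m < n) : Rc p q c m n = 0 := by
  rw [Rc, filter_false_of_mem fun a _ => ((ones_le a).trans_lt h).ne, sum_empty]

theorem Rc_self (p q c : ℝ) (n : ℕ) : Rc p q c n n = 1 := by
  induction n generalizing c with
  | zero => simp [Rc, wtc, ones]
  | succ n ih => rw [Rc_succ_succ, Rc_of_lt p q c n.lt_succ_self, ih, mul_zero, zero_add]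

theorem Rc_add_eq_completeHomogeneous (p q c : ℝ) (n N : ℕ) :
    Rc p q c (n + N) n = completeHomogeneous (gapWeight p q c n) N := by
  induction N generalizing c n with
  | zero => rw [add_zero, Rc_self, completeHomogeneous_zero]
  | succ N ihN =>
    induction n generalizing c with
    | zero =>
      rw [zero_add, Rc_succ_zero, ← zero_add N, ihN, completeHomogeneous_succ,
        completeHomogeneous_fin_zero]
      simp [gapWeight]
    | succ n ihn =>
      rw [show n + 1 + (N + 1) = n + 1 + N + 1 by ring, Rc_succ_succ, ihN,
        show n + 1 + N = n + (N + 1) by ring, ihn]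
      conv_rhs => rw [completeHomogeneous_succ, tail_gapWeight, gapWeight_zero]
      push_cast
      ring

/-- for a fixed number of particles `n` and `0 ≤ q < p`, the restricted
partition function satisfies `R(L, n; p, q) ~ (1 + n·p)^(L-1) / (n!·(p-q)^n)` as `L → ∞`. -/
theorem R_asymptotics_finite_particles (n : ℕ) (p q : ℝ) (hq : 0 ≤ q) (hpq : q < p) :
    Filter.Tendsto
      (fun L : ℕ => R L n p q * (n.factorial : ℝ) * (p - q) ^ n / (1 + (n : ℝ) * p) ^ (L - 1))
      Filter.atTop (nhds 1) := by
  have hR : ∀ L, n + 1 ≤ L → R L n p q = completeHomogeneous (gapWeight p q 1 n) (L - (n + 1)) :=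
    fun L hL => by
      rw [R_eq_Rc, show L - 1 = n + (L - (n + 1)) by omega, Rc_add_eq_completeHomogeneous]
  have hd0 : gapWeight p q 1 n 0 ≠ 0 := by
    have := hq.trans_lt hpq
    rw [gapWeight_zero]
    positivity
  have hlim := tendsto_completeHomogeneous_mul_prod_div_pow _ hd0
    (abs_gapWeight_succ_lt n zero_le_one hq hpq)
  refine (hlim.comp (tendsto_sub_atTop_nat (n + 1))).congr' ?_
  filter_upwards [eventually_ge_atTop (n + 1)] with L hL
  rw [Function.comp_apply, prod_gapWeight_zero_sub_succ, gapWeight_zero, hR L hL,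
    show L - (n + 1) + n = L - 1 by omega]
  ring
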